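/- arXiv:1712.10295 — 2 statements merged into one kernel-verified Lean document; each statement's English description precedes it below -/
import Mathlib

section
/- Let Φ : X → ℝ be a C¹ functional on a real Hilbert space X and let K ⊂ X be a closed convex subset. Suppose (i) the map I − Φ′ (identifying Φ′ with the gradient) maps K into K; (ii) Φ is bounded below on K; (iii) Φ satisfies the Palais–Smale condition relative to K. Then there exists u₀ ∈ K such that Φ′(u₀) = 0 and Φ(u₀) = inf_{u ∈ K} Φ(u). -/
open Filter

theorem my_ekeland {X : Type*} [NormedAddCommGroup X] [CompleteSpace X]
    (Φ : X → ℝ) (hΦc : Continuous Φ)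
    (K : Set X) (hKne : K.Nonempty) (hKcl : IsClosed K)
    (hbdd : BddBelow (Φ '' K)) {ε : ℝ} (hε : 0 < ε) :
    ∃ v ∈ K, Φ v ≤ sInf (Φ '' K) + ε ∧ ∀ w ∈ K, Φ v - ε * ‖w - v‖ ≤ Φ w := by
  classical
  set m := sInf (Φ '' K) with hm
  have hlb : ∀ u ∈ K, m ≤ Φ u := fun u hu => csInf_le hbdd ⟨u, hu, rfl⟩
  -- starting point
  obtain ⟨y, ⟨u₀, hu₀K, rfl⟩, hy⟩ := exists_lt_of_csInf_lt (hKne.image Φ)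
    (show m < m + ε by linarith)
  -- the set S u
  set S : X → Set X := fun u => {w ∈ K | Φ w + ε * ‖w - u‖ ≤ Φ u} with hS
  have hSsub : ∀ u, S u ⊆ K := fun u w hw => hw.1
  have hSmem : ∀ u ∈ K, u ∈ S u := fun u hu => ⟨hu, by simp⟩
  have hSbdd : ∀ u, BddBelow (Φ '' S u) := fun u =>
    hbdd.mono (Set.image_mono (f := Φ) (hSsub u))
  have key : ∀ (n : ℕ) (u : X), ∃ w : X, u ∈ K →
      w ∈ S u ∧ Φ w ≤ sInf (Φ '' S u) + (1/2)^n := by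
    intro n u
    by_cases hu : u ∈ K
    · have hne : (Φ '' S u).Nonempty := ⟨Φ u, u, hSmem u hu, rfl⟩
      obtain ⟨y, ⟨w, hwS, rfl⟩, hy⟩ := exists_lt_of_csInf_lt hne
        (show sInf (Φ '' S u) < sInf (Φ '' S u) + (1/2)^n from by
          have h : (0:ℝ) < (1/2)^n := by positivity
          linarith)
      exact ⟨w, fun _ => ⟨hwS, hy.le⟩⟩
    · exact ⟨u, fun h => absurd h hu⟩
  choose F hF using key
  set seq : ℕ → X := fun n => Nat.rec u₀ (fun n v => F n v) n with hseq
  have hseq0 : seq 0 = u₀ := rfl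
  have hseqS : ∀ n, seq (n+1) = F n (seq n) := fun n => rfl
  have hK : ∀ n, seq n ∈ K := by
    intro n
    induction n with
    | zero => exact hu₀K
    | succ k ih => exact ((hF k (seq k) ih).1).1
  have hstep : ∀ n, Φ (seq (n+1)) + ε * ‖seq (n+1) - seq n‖ ≤ Φ (seq n) :=
    fun n => ((hF n (seq n) (hK n)).1).2
  have hmin : ∀ n, Φ (seq (n+1)) ≤ sInf (Φ '' S (seq n)) + (1/2)^n :=
    fun n => (hF n (seq n) (hK n)).2
  set a : ℕ → ℝ := fun n => Φ (seq n) with ha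
  have hanti : Antitone a := antitone_nat_of_succ_le (fun n => by
    have := hstep n
    have h0 : 0 ≤ ε * ‖seq (n+1) - seq n‖ := by positivity
    simp only [ha]; linarith)
  have halb : ∀ n, m ≤ a n := fun n => hlb _ (hK n)
  -- telescoping
  have htel : ∀ k n, k ≤ n → ε * ‖seq n - seq k‖ ≤ a k - a n := by
    intro k n hkn
    induction n, hkn using Nat.le_induction with
    | base => simp
    | succ n hkn ih =>
      have h1 := hstep n
      calc ε * ‖seq (n+1) - seq k‖
          ≤ ε * (‖seq (n+1) - seq n‖ + ‖seq n - seq k‖) := by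
            have := norm_sub_le_norm_sub_add_norm_sub (seq (n+1)) (seq n) (seq k)
            nlinarith
        _ = ε * ‖seq (n+1) - seq n‖ + ε * ‖seq n - seq k‖ := by ring
        _ ≤ (a n - a (n+1)) + (a k - a n) := by
            have : ε * ‖seq (n+1) - seq n‖ ≤ a n - a (n+1) := by
              have := hstep n; simp only [ha]; linarith
            linarith
        _ = a k - a (n+1) := by ring
  -- a converges
  have haconv : ∃ L, Tendsto a atTop (nhds L) := by
    refine ⟨⨅ n, a n, tendsto_atTop_ciInf hanti ⟨m, ?_⟩⟩
    rintro x ⟨n, rfl⟩; exact halb n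
  obtain ⟨L, hL⟩ := haconv
  have hLle : ∀ n, L ≤ a n := fun n =>
    le_of_tendsto hL (eventually_atTop.2 ⟨n, fun j hj => hanti hj⟩)
  -- seq is Cauchy
  have hcauchy : CauchySeq seq := by
    apply cauchySeq_of_le_tendsto_0 (fun n => 2 * (a n - L) / ε)
    · intro i j N hNi hNj
      have h1 := htel N i hNi
      have h2 := htel N j hNj
      have h3 : dist (seq i) (seq j) ≤ ‖seq i - seq N‖ + ‖seq j - seq N‖ := by
        rw [dist_eq_norm]
        have := norm_sub_le_norm_sub_add_norm_sub (seq i) (seq N) (seq j)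
        have := norm_sub_rev (seq N) (seq j)
        calc ‖seq i - seq j‖ ≤ ‖seq i - seq N‖ + ‖seq N - seq j‖ :=
              norm_sub_le_norm_sub_add_norm_sub _ _ _
          _ = ‖seq i - seq N‖ + ‖seq j - seq N‖ := by rw [norm_sub_rev (seq N)]
      have hLN := hLle N
      have hli := hLle i
      have hlj := hLle j
      rw [le_div_iff₀ hε]
      nlinarith [mul_le_mul_of_nonneg_right h3 hε.le]
    · have : Tendsto (fun n => a n - L) atTop (nhds (L - L)) := hL.sub tendsto_const_nhds
      simp only [sub_self] at this
      have h2 : Tendsto (fun n => 2 * (a n - L) / ε) atTop (nhds (2 * 0 / ε)) :=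
        (this.const_mul 2).div_const ε
      simpa using h2
  obtain ⟨v, hv⟩ := cauchySeq_tendsto_of_complete hcauchy
  have hvK : v ∈ K := hKcl.mem_of_tendsto hv (Eventually.of_forall hK)
  have hΦv : Tendsto a atTop (nhds (Φ v)) := (hΦc.tendsto v).comp hv
  have hLv : Φ v = L := tendsto_nhds_unique hΦv hL
  -- Φ v + ε ‖v - seq n‖ ≤ a n
  have hvS : ∀ n, Φ v + ε * ‖v - seq n‖ ≤ a n := by
    intro n
    have h1 : Tendsto (fun j => a j + ε * ‖seq j - seq n‖) atTop
        (nhds (Φ v + ε * ‖v - seq n‖)) := by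
      refine hΦv.add (Tendsto.const_mul ε ?_)
      exact ((continuous_norm.comp (continuous_id.sub continuous_const)).tendsto v).comp hv
    refine le_of_tendsto h1 (eventually_atTop.2 ⟨n, fun j hj => ?_⟩)
    have := htel n j hj
    linarith
  refine ⟨v, hvK, ?_, ?_⟩
  · have := hvS 0
    have h0 : 0 ≤ ε * ‖v - seq 0‖ := by positivity
    have : Φ v ≤ a 0 := by linarith
    simpa only [ha, hseq0] using this.trans hy.le
  · intro w hw
    by_contra hcon
    push_neg at hcon
    -- Φ w < Φ v - ε ‖w - v‖
    have hwS : ∀ n, w ∈ S (seq n) := by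
      intro n
      refine ⟨hw, ?_⟩
      have h1 : ‖w - seq n‖ ≤ ‖w - v‖ + ‖v - seq n‖ :=
        norm_sub_le_norm_sub_add_norm_sub _ _ _
      have h2 := hvS n
      nlinarith
    have h3 : ∀ n, a (n+1) ≤ Φ w + (1/2)^n := by
      intro n
      have := hmin n
      have h4 : sInf (Φ '' S (seq n)) ≤ Φ w := csInf_le (hSbdd _) ⟨w, hwS n, rfl⟩
      simp only [ha]; linarith
    have h5 : Φ v ≤ Φ w := by
      have ht : Tendsto (fun n : ℕ => Φ w + (1/2:ℝ)^n) atTop (nhds (Φ w)) := by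
        have h0 : Tendsto (fun n : ℕ => (1/2:ℝ)^n) atTop (nhds 0) :=
          tendsto_pow_atTop_nhds_zero_of_lt_one (by norm_num) (by norm_num)
        have := (tendsto_const_nhds (x := Φ w) (f := atTop (α := ℕ))).add h0
        simpa using this
      have hA : Tendsto (fun n => a (n+1)) atTop (nhds L) :=
        hL.comp (tendsto_add_atTop_nat 1)
      rw [hLv]
      exact le_of_tendsto_of_tendsto' hA ht h3
    have : 0 ≤ ε * ‖w - v‖ := by positivity
    linarith


/-- Proposition 2.8: constrained minimization on a closed convex set K
invariant under I − Φ′ produces a free critical point attaining inf_K Φ. -/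
theorem stmt_6 {X : Type*} [NormedAddCommGroup X] [InnerProductSpace ℝ X] [CompleteSpace X]
    (Φ : X → ℝ) (Φ' : X → X)
    (hgrad : ∀ u, HasGradientAt Φ (Φ' u) u) (hcont : Continuous Φ')
    (K : Set X) (hKne : K.Nonempty) (hKcl : IsClosed K) (hKcv : Convex ℝ K)
    (hmap : ∀ u ∈ K, u - Φ' u ∈ K)
    (hbdd : BddBelow (Φ '' K))
    (hPSK : ∀ u : ℕ → X, (∀ n, u n ∈ K) → (∃ C : ℝ, ∀ n, |Φ (u n)| ≤ C) →
      Tendsto (fun n => ‖Φ' (u n)‖) atTop (nhds 0) →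
      ∃ v ∈ K, ∃ σ : ℕ → ℕ, StrictMono σ ∧ Tendsto (u ∘ σ) atTop (nhds v)) :
    ∃ u₀ : X, Φ' u₀ = 0 ∧ Φ u₀ = sInf (Φ '' K) := by
  classical
  have hΦc : Continuous Φ :=
    continuous_iff_continuousAt.2 fun u => (hgrad u).differentiableAt.continuousAt
  set m := sInf (Φ '' K) with hm
  have hlb : ∀ u ∈ K, m ≤ Φ u := fun u hu => csInf_le hbdd ⟨u, hu, rfl⟩
  -- Step 1: for every ε > 0 there is v ∈ K with Φ v ≤ m + ε and ‖Φ' v‖ ≤ ε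
  have step1 : ∀ ε : ℝ, 0 < ε → ∃ v ∈ K, Φ v ≤ m + ε ∧ ‖Φ' v‖ ≤ ε := by
    intro ε hε
    obtain ⟨v, hvK, hvΦ, hvE⟩ := my_ekeland Φ hΦc K hKne hKcl hbdd hε
    refine ⟨v, hvK, hvΦ, ?_⟩
    set p := Φ' v with hp
    -- for t ∈ (0,1], v - t • p ∈ K
    have hmemK : ∀ t : ℝ, 0 ≤ t → t ≤ 1 → v - t • p ∈ K := by
      intro t ht0 ht1
      have h1 : (1 - t) • v + t • (v - p) ∈ K :=
        hKcv hvK (hmap v hvK) (by linarith) ht0 (by ring)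
      have h2 : (1 - t) • v + t • (v - p) = v - t • p := by
        rw [smul_sub, sub_smul, one_smul]; abel
      rwa [h2] at h1
    -- Ekeland inequality along the ray
    have hray : ∀ t : ℝ, 0 ≤ t → t ≤ 1 → Φ v - ε * (t * ‖p‖) ≤ Φ (v - t • p) := by
      intro t ht0 ht1
      have := hvE (v - t • p) (hmemK t ht0 ht1)
      have hn : ‖v - t • p - v‖ = t * ‖p‖ := by
        rw [sub_sub_cancel_left, norm_neg, norm_smul, Real.norm_eq_abs, abs_of_nonneg ht0]
      rwa [hn] at this
    -- derivative of t ↦ Φ (v - t • p) + ε * t * ‖p‖ at 0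
    have hc : HasDerivAt (fun t : ℝ => v - t • p) (-((1:ℝ) • p)) 0 :=
      ((hasDerivAt_id (0:ℝ)).smul_const p).const_sub v
    have hg : HasDerivAt (fun t : ℝ => Φ (v - t • p)) (-(‖p‖^2)) 0 := by
      have hfd : HasFDerivAt Φ (InnerProductSpace.toDual ℝ X p) (v - (0:ℝ) • p) := by
        simpa using (hgrad v).hasFDerivAt
      have := hfd.comp_hasDerivAt 0 hc
      refine HasDerivAt.congr_deriv this ?_
      rw [InnerProductSpace.toDual_apply_apply, inner_neg_right, one_smul,
        real_inner_self_eq_norm_sq]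
    have hh : HasDerivAt (fun t : ℝ => Φ (v - t • p) + ε * t * ‖p‖)
        (-(‖p‖^2) + ε * ‖p‖) 0 := by
      have h2 : HasDerivAt (fun t : ℝ => ε * t * ‖p‖) (ε * ‖p‖) 0 := by
        have := ((hasDerivAt_id (0:ℝ)).const_mul ε).mul_const ‖p‖
        simpa using this
      exact hg.add h2
    -- derivative is nonneg since the function has a min at 0 on [0,1]
    have hd : 0 ≤ -(‖p‖^2) + ε * ‖p‖ := by
      have hslope := hasDerivAt_iff_tendsto_slope.1 hh
      have hmono : nhdsWithin (0:ℝ) (Set.Ioi 0) ≤ nhdsWithin (0:ℝ) {(0:ℝ)}ᶜ :=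
        nhdsWithin_mono 0 (fun t ht => ne_of_gt ht)
      refine ge_of_tendsto (hslope.mono_left hmono) ?_
      filter_upwards [Ioo_mem_nhdsGT_of_mem (Set.mem_Ico.2 ⟨le_refl (0:ℝ), one_pos⟩)]
        with t ht
      obtain ⟨ht0, ht1⟩ := ht
      have hr := hray t ht0.le ht1.le
      have heq : slope (fun t : ℝ => Φ (v - t • p) + ε * t * ‖p‖) 0 t
          = ((Φ (v - t • p) + ε * t * ‖p‖) - Φ v) / t := by
        simp only [slope_def_field, zero_smul, sub_zero, mul_zero, zero_mul, add_zero]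
      rw [heq]
      apply div_nonneg _ ht0.le
      nlinarith
    by_cases hp0 : p = 0
    · simp [hp0, hε.le]
    · have hpn : 0 < ‖p‖ := norm_pos_iff.2 hp0
      nlinarith
  -- Step 2: build the sequence and apply PS
  have hsel : ∀ n : ℕ, ∃ v, v ∈ K ∧ Φ v ≤ m + 1/(n+1) ∧ ‖Φ' v‖ ≤ 1/(n+1) := by
    intro n
    obtain ⟨v, hv1, hv2, hv3⟩ := step1 (1/(n+1)) (by positivity)
    exact ⟨v, hv1, hv2, hv3⟩
  choose u hK hΦu hΦ'u using hsel
  have hrec : Tendsto (fun n : ℕ => 1/((n:ℝ)+1)) atTop (nhds 0) :=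
    tendsto_one_div_add_atTop_nhds_zero_nat
  obtain ⟨v, hvK, σ, hσ, hconv⟩ := hPSK u hK
    ⟨|m| + 1, fun n => by
      have h1 := hlb (u n) (hK n)
      have h2 := hΦu n
      have h3 : 1/((n:ℝ)+1) ≤ 1 := by
        rw [div_le_one (by positivity)]; linarith [Nat.cast_nonneg (α := ℝ) n]
      rw [abs_le]
      constructor <;> [skip; skip] <;> cases' abs_cases m with h h <;> linarith⟩
    (by
      apply squeeze_zero (fun n => norm_nonneg _) hΦ'u hrec)
  have hrecσ : Tendsto (fun n : ℕ => 1/((σ n:ℝ)+1)) atTop (nhds 0) :=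
    hrec.comp hσ.tendsto_atTop
  refine ⟨v, ?_, ?_⟩
  · have h1 : Tendsto (fun n => Φ' (u (σ n))) atTop (nhds (Φ' v)) :=
      (hcont.tendsto v).comp hconv
    have h2 : Tendsto (fun n => Φ' (u (σ n))) atTop (nhds 0) := by
      rw [tendsto_zero_iff_norm_tendsto_zero]
      exact squeeze_zero (fun n => norm_nonneg _) (fun n => hΦ'u (σ n)) hrecσ
    exact tendsto_nhds_unique h1 h2
  · have h1 : Tendsto (fun n => Φ (u (σ n))) atTop (nhds (Φ v)) :=
      (hΦc.tendsto v).comp hconv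
    have h2 : Tendsto (fun n : ℕ => m + 1/((σ n:ℝ)+1)) atTop (nhds m) := by
      simpa using tendsto_const_nhds.add hrecσ
    have hle : Φ v ≤ m := le_of_tendsto_of_tendsto' h1 h2 (fun n => hΦu (σ n))
    have hge : m ≤ Φ v := ge_of_tendsto h1 (Eventually.of_forall fun n => hlb _ (hK (σ n)))
    linarith
end

section
/- Let H be a Hilbert space with trace T into L²(Ω), Poincaré inequality λ₁‖T(U)‖²₂ ≤ ‖U‖², and eigen-element E with ‖E‖² = λ₁, ⟨U,E⟩ = λ₁∫_Ω T(U)φ₁dx for all U, where φ₁ = T(E) ≥ 0 with |φ₁|₂ = 1. Suppose V₀ ∈ H with v₀ = T(V₀) ≥ 0 satisfies ⟨V₀, V⟩ = ∫_Ω γ T(V)dx for all V ∈ H, where γ ∈ L²(Ω) with γ ≥ μ̄ v₀ for some μ̄ > λ₁. Then testing with V = E gives λ₁∫_Ω v₀φ₁dx = ∫_Ω γφ₁dx ≥ μ̄∫_Ω v₀φ₁dx, and since φ₁ > 0 a.e. and v₀ ≥ 0, it follows that v₀ = 0 a.e. and hence γ = 0. -/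
open MeasureTheory
open scoped RealInnerProductSpace

/-- contradiction step in Lemma 3.8: testing the limit identity with the
eigen-element E forces λ₁∫v₀φ₁ = ∫γφ₁ ≥ μ̄∫v₀φ₁; since μ̄ > λ₁, φ₁ > 0 a.e. and v₀ ≥ 0,
it follows that v₀ = 0 a.e. and hence γ = 0. -/
theorem stmt_17 {H : Type*} [NormedAddCommGroup H] [InnerProductSpace ℝ H]
    {Ω : Type*} [MeasurableSpace Ω] (ν : Measure Ω)
    (T : H →ₗ[ℝ] Ω → ℝ) (lam μbar : ℝ) (hlam : 0 < lam) (hμ : lam < μbar)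
    (E : H) (φ₁ : Ω → ℝ) (hTE : ∀ x, T E x = φ₁ x) (hE : ‖E‖ ^ 2 = lam)
    (hPoin : ∀ U : H, lam * ∫ x, (T U x) ^ 2 ∂ν ≤ ‖U‖ ^ 2)
    (hEtest : ∀ U : H, ⟪U, E⟫ = lam * ∫ x, T U x * φ₁ x ∂ν)
    (hφpos : ∀ᵐ x ∂ν, 0 < φ₁ x) (hφnorm : ∫ x, (φ₁ x) ^ 2 ∂ν = 1)
    (V₀ : H) (v₀ : Ω → ℝ) (hv₀ : ∀ x, v₀ x = T V₀ x)
    (hv₀nonneg : ∀ᵐ x ∂ν, 0 ≤ v₀ x)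
    (γ : Ω → ℝ) (hγ2 : MemLp γ 2 ν)
    (hγge : ∀ᵐ x ∂ν, μbar * v₀ x ≤ γ x)
    (hident : ∀ V : H, ⟪V₀, V⟫ = ∫ x, γ x * T V x ∂ν)
    (hint1 : Integrable (fun x => v₀ x * φ₁ x) ν)
    (hint2 : Integrable (fun x => γ x * φ₁ x) ν) :
    (lam * ∫ x, v₀ x * φ₁ x ∂ν = ∫ x, γ x * φ₁ x ∂ν) ∧
    (μbar * ∫ x, v₀ x * φ₁ x ∂ν ≤ ∫ x, γ x * φ₁ x ∂ν) ∧
    (∀ᵐ x ∂ν, v₀ x = 0) ∧ (∀ᵐ x ∂ν, γ x = 0) := by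
  have h1 : lam * ∫ x, v₀ x * φ₁ x ∂ν = ∫ x, γ x * φ₁ x ∂ν := by
    have hA := hEtest V₀
    have hB := hident E
    have e1 : (∫ x, T V₀ x * φ₁ x ∂ν) = ∫ x, v₀ x * φ₁ x ∂ν := by
      congr 1; funext x; rw [hv₀]
    have e2 : (∫ x, γ x * T E x ∂ν) = ∫ x, γ x * φ₁ x ∂ν := by
      congr 1; funext x; rw [hTE]
    rw [e1] at hA
    rw [e2] at hB
    rw [hA] at hB
    exact hB
  have h2 : μbar * ∫ x, v₀ x * φ₁ x ∂ν ≤ ∫ x, γ x * φ₁ x ∂ν := by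
    rw [← integral_const_mul]
    refine integral_mono_ae (hint1.const_mul μbar) hint2 ?_
    filter_upwards [hγge, hφpos] with x h1 h2
    calc μbar * (v₀ x * φ₁ x) = (μbar * v₀ x) * φ₁ x := by ring
      _ ≤ γ x * φ₁ x := mul_le_mul_of_nonneg_right h1 h2.le
  -- integral of v₀φ₁ is zero
  have hnn : 0 ≤ᵐ[ν] fun x => v₀ x * φ₁ x := by
    filter_upwards [hv₀nonneg, hφpos] with x hx hy
    exact mul_nonneg hx hy.le
  have hIz : ∫ x, v₀ x * φ₁ x ∂ν = 0 := by
    have hInn : 0 ≤ ∫ x, v₀ x * φ₁ x ∂ν := integral_nonneg_of_ae hnn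
    nlinarith [h1, h2]
  have hae1 : (fun x => v₀ x * φ₁ x) =ᵐ[ν] 0 :=
    (integral_eq_zero_iff_of_nonneg_ae hnn hint1).mp hIz
  have hv0 : ∀ᵐ x ∂ν, v₀ x = 0 := by
    filter_upwards [hae1, hφpos] with x hx hy
    have : v₀ x * φ₁ x = 0 := hx
    rcases mul_eq_zero.mp this with h | h
    · exact h
    · exact absurd h hy.ne'
  refine ⟨h1, h2, hv0, ?_⟩
  -- γ ≥ 0 a.e. and ∫ γφ₁ = 0
  have hγnn : ∀ᵐ x ∂ν, 0 ≤ γ x := by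
    filter_upwards [hγge, hv0] with x hx hz
    rw [hz, mul_zero] at hx; exact hx
  have hnn2 : 0 ≤ᵐ[ν] fun x => γ x * φ₁ x := by
    filter_upwards [hγnn, hφpos] with x hx hy
    exact mul_nonneg hx hy.le
  have hIz2 : ∫ x, γ x * φ₁ x ∂ν = 0 := by
    rw [← h1, hIz, mul_zero]
  have hae2 : (fun x => γ x * φ₁ x) =ᵐ[ν] 0 :=
    (integral_eq_zero_iff_of_nonneg_ae hnn2 hint2).mp hIz2
  filter_upwards [hae2, hφpos] with x hx hy
  have : γ x * φ₁ x = 0 := hx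
  rcases mul_eq_zero.mp this with h | h
  · exact h
  · exact absurd h hy.ne'
end
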